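/- arXiv:1512.08667 — 2 statements merged into one kernel-verified Lean document; each statement's English description precedes it below -/
import Mathlib

section
/- The function F(c) = (1 − 4c²)/(c² + (1 + c²)²/(1 − c²)) is strictly decreasing on [0, 1/2), takes values in (0, 1] there, and satisfies F(c*) = 1/4 for c* = √((23 − √337)/32). -/
/-!
Clearing the inner denominator gives `F(c) = G(c²)` with `G(t) = (1 - 4t)(1 - t)/(1 + 3t)`.
Cross-multiplying, `G(s) - G(t)` has the sign of `(t - s)(8 - 4s - 4t - 12st)`, so `G` decreases
on `[0, 1/2]`; together with `G(0) = 1` this gives monotonicity and the bounds. The equation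
`G(t) = 1/4` is the quadratic `16t² - 23t + 3 = 0`, whose smaller root is `(23 - √337)/32`.
-/

open Set

/-- The limiting pinching ratio `F(c) = (1 − 4c²)/(c² + (1 + c²)²/(1 − c²))`. -/
noncomputable def pinchF (c : ℝ) : ℝ :=
  (1 - 4 * c ^ 2) / (c ^ 2 + (1 + c ^ 2) ^ 2 / (1 - c ^ 2))

noncomputable def pinchG (t : ℝ) : ℝ :=
  (1 - 4 * t) * (1 - t) / (1 + 3 * t)

lemma pinchF_eq_pinchG_sq {c : ℝ} (hc : c ^ 2 ≠ 1) : pinchF c = pinchG (c ^ 2) := by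
  have h1 : (1 : ℝ) - c ^ 2 ≠ 0 := sub_ne_zero.2 hc.symm
  have h3 : (1 : ℝ) + 3 * c ^ 2 ≠ 0 := by positivity
  have hden : c ^ 2 + (1 + c ^ 2) ^ 2 / (1 - c ^ 2) = (1 + 3 * c ^ 2) / (1 - c ^ 2) := by
    field_simp
    ring
  rw [pinchF, pinchG, hden]
  field_simp

lemma pinchG_zero : pinchG 0 = 1 := by
  norm_num [pinchG]

lemma pinchG_pos {t : ℝ} (ht : t ∈ Ico (0 : ℝ) (1 / 4)) : 0 < pinchG t := by
  obtain ⟨ht0, ht1⟩ := ht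
  unfold pinchG
  have : 0 < 1 - 4 * t := by linarith
  have : 0 < 1 - t := by linarith
  positivity

lemma pinchG_strictAntiOn : StrictAntiOn pinchG (Icc 0 (1 / 2)) := by
  rintro s ⟨hs0, hs1⟩ t ⟨ht0, ht1⟩ hst
  have hfactor : 0 < 8 - 4 * s - 4 * t - 12 * s * t := by nlinarith
  have hdiff : (1 - 4 * t) * (1 - t) * (1 + 3 * s) < (1 - 4 * s) * (1 - s) * (1 + 3 * t) := by
    linear_combination mul_pos (sub_pos.2 hst) hfactor
  unfold pinchG
  rwa [div_lt_div_iff₀ (by positivity) (by positivity)]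

lemma pinchG_eq_one_fourth_iff {t : ℝ} (ht : 0 ≤ t) :
    pinchG t = 1 / 4 ↔ 16 * t ^ 2 - 23 * t + 3 = 0 := by
  rw [pinchG, div_eq_iff (by positivity)]
  constructor <;> intro h
  · linear_combination 4 * h
  · linear_combination h / 4

lemma sq_mem_Ico_of_mem_Ico {c : ℝ} (hc : c ∈ Ico (0 : ℝ) (1 / 2)) : c ^ 2 ∈ Ico (0 : ℝ) (1 / 4) :=
  ⟨sq_nonneg c, by nlinarith [hc.1, hc.2]⟩

lemma pinchF_eq_pinchG_sq_of_mem_Ico {c : ℝ} (hc : c ∈ Ico (0 : ℝ) (1 / 2)) :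
    pinchF c = pinchG (c ^ 2) :=
  pinchF_eq_pinchG_sq (by linarith [(sq_mem_Ico_of_mem_Ico hc).2])

/-- `F` is strictly decreasing on `[0,1/2)`, takes values in `(0,1]` there, and
`F(c*) = 1/4` for `c* = √((23 − √337)/32)`. -/
theorem stmt3 :
    StrictAntiOn pinchF (Set.Ico 0 (1 / 2)) ∧
    (∀ c ∈ Set.Ico (0 : ℝ) (1 / 2), pinchF c ∈ Set.Ioc 0 1) ∧
    pinchF (Real.sqrt ((23 - Real.sqrt 337) / 32)) = 1 / 4 := by
  have hIco : Ico (0 : ℝ) (1 / 4) ⊆ Icc 0 (1 / 2) := fun t ht => ⟨ht.1, by linarith [ht.2]⟩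
  refine ⟨?_, fun c hc => ?_, ?_⟩
  · intro a ha b hb hab
    rw [pinchF_eq_pinchG_sq_of_mem_Ico ha, pinchF_eq_pinchG_sq_of_mem_Ico hb]
    exact pinchG_strictAntiOn (hIco (sq_mem_Ico_of_mem_Ico ha)) (hIco (sq_mem_Ico_of_mem_Ico hb))
      (pow_lt_pow_left₀ hab ha.1 two_ne_zero)
  · have hc2 := sq_mem_Ico_of_mem_Ico hc
    rw [pinchF_eq_pinchG_sq_of_mem_Ico hc, ← pinchG_zero]
    exact ⟨pinchG_pos hc2,
      pinchG_strictAntiOn.antitoneOn (hIco ⟨le_rfl, by norm_num⟩) (hIco hc2) hc2.1⟩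
  · have h337 : Real.sqrt 337 ^ 2 = 337 := Real.sq_sqrt (by norm_num)
    have hroot_nonneg : 0 ≤ (23 - Real.sqrt 337) / 32 := by nlinarith [Real.sqrt_nonneg 337]
    have hsq := Real.sq_sqrt hroot_nonneg
    rw [pinchF_eq_pinchG_sq (by rw [hsq]; nlinarith [Real.sqrt_nonneg 337]), hsq,
      pinchG_eq_one_fourth_iff hroot_nonneg]
    linear_combination (1 / 64 : ℝ) * h337
end

section
/- For every c with 0 ≤ c < √((23 − √337)/32), one has (1 − 4c²)/(c² + (1 + c²)²/(1 − c²)) > 1/4. -/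
/-!
With `x = c²` the denominator simplifies to `(1 + 3x)/(1 - x)`, so the claim becomes
`4 (1 - 4x)(1 - x) > 1 + 3x`, i.e. `16x² - 23x + 3 > 0`. The roots of this quadratic are
`(23 ± √337)/32`, and `c < c*` says exactly that `x` lies below the smaller one.
-/

lemma add_sq_one_add_div_one_sub {x : ℝ} (hx : x ≠ 1) :
    x + (1 + x) ^ 2 / (1 - x) = (1 + 3 * x) / (1 - x) := by
  have : 1 - x ≠ 0 := sub_ne_zero.mpr hx.symm
  field_simp
  ring

lemma one_quarter_lt_div_iff {x : ℝ} (hx0 : 0 ≤ x) (hx1 : x < 1) :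
    1 / 4 < (1 - 4 * x) / ((1 + 3 * x) / (1 - x)) ↔ 0 < 16 * x ^ 2 - 23 * x + 3 := by
  have h1x : 0 < 1 - x := by linarith
  rw [div_div_eq_mul_div, lt_div_iff₀ (by linarith)]
  constructor <;> intro h <;> nlinarith

lemma quadratic_pos_of_lt_smaller_root {x : ℝ} (hx : x < (23 - √337) / 32) :
    0 < 16 * x ^ 2 - 23 * x + 3 := by
  have hsq : √337 ^ 2 = 337 := Real.sq_sqrt (by norm_num)
  have hfactor : 16 * x ^ 2 - 23 * x + 3
      = 16 * ((23 - √337) / 32 - x) * ((23 + √337) / 32 - x) := by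
    linear_combination (1 / 64 : ℝ) * hsq
  rw [hfactor]
  have := Real.sqrt_nonneg 337
  have : 0 < (23 + √337) / 32 - x := by linarith
  positivity

/-- For `0 ≤ c < √((23 − √337)/32)`, the pinching ratio exceeds `1/4`. -/
theorem stmt4 (c : ℝ) (h0 : 0 ≤ c) (h1 : c < Real.sqrt ((23 - Real.sqrt 337) / 32)) :
    (1 - 4 * c ^ 2) / (c ^ 2 + (1 + c ^ 2) ^ 2 / (1 - c ^ 2)) > 1 / 4 := by
  have hx : c ^ 2 < (23 - √337) / 32 := (Real.lt_sqrt h0).mp h1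
  have hx1 : c ^ 2 < 1 := by linarith [Real.sqrt_nonneg 337]
  rw [add_sq_one_add_div_one_sub hx1.ne, gt_iff_lt, one_quarter_lt_div_iff (sq_nonneg c) hx1]
  exact quadratic_pos_of_lt_smaller_root hx
end
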